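/- Assume the N-player Riccati system has a solution (P_1, …, P_N) on [0, T]. For 1 ≤ i ≤ N let J_{1i} ∈ ℝ^{Nn×Nn} be the block-permutation matrix obtained from I_{Nn} (partitioned into N×N blocks of size n×n) by exchanging the 1st and i-th block rows (so J_{1i}ᵀ = J_{1i}⁻¹ = J_{1i}). Then for every i > 1 and every t ∈ [0,T], P_i(t) = J_{1i}ᵀ P_1(t) J_{1i}. -/

import Mathlib

open Matrix

/-- `Â = I_N ⊗ A + (1/N)(𝟙_{N×N} ⊗ G)`, written entrywise. -/
noncomputable def hatA (n N : ℕ) (A G : Matrix (Fin n) (Fin n) ℝ) :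
    Matrix (Fin N × Fin n) (Fin N × Fin n) ℝ :=
  Matrix.of fun p q => (if p.1 = q.1 then A p.2 q.2 else 0) + (1 / (N : ℝ)) * G p.2 q.2

/-- `B_k = e_k ⊗ B`. -/
noncomputable def Bblk (n n1 N : ℕ) (B : Matrix (Fin n) (Fin n1) ℝ) (k : Fin N) :
    Matrix (Fin N × Fin n) (Fin n1) ℝ :=
  Matrix.of fun p c => if p.1 = k then B p.2 c else 0

/-- `K_i = [0,…,0, I_n, 0,…,0] − (1/N)[Γ, …, Γ]` with `I_n` in the `i`-th block. -/
noncomputable def Kblk (n N : ℕ) (Γ : Matrix (Fin n) (Fin n) ℝ) (i : Fin N) :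
    Matrix (Fin n) (Fin N × Fin n) ℝ :=
  Matrix.of fun r q => (if q.1 = i ∧ r = q.2 then (1 : ℝ) else 0) - (1 / (N : ℝ)) * Γ r q.2

/-- `Q_i = K_iᵀ Q K_i` (and `Q_{if} = K_{if}ᵀ Q_f K_{if}` with `Γ_f, Q_f`). -/
noncomputable def Qblk (n N : ℕ) (Q Γ : Matrix (Fin n) (Fin n) ℝ) (i : Fin N) :
    Matrix (Fin N × Fin n) (Fin N × Fin n) ℝ :=
  (Kblk n N Γ i)ᵀ * Q * Kblk n N Γ i

/-- Right-hand side of the `N`-player Riccati system: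
`−(P_i Â + Âᵀ P_i) + P_i Σ_k B_k R⁻¹ B_kᵀ P_k + Σ_k P_k B_k R⁻¹ B_kᵀ P_i
  − P_i B_i R⁻¹ B_iᵀ P_i − Q_i`. -/
noncomputable def riccatiRHS (n n1 N : ℕ) (A G Q Γ : Matrix (Fin n) (Fin n) ℝ)
    (B : Matrix (Fin n) (Fin n1) ℝ) (R : Matrix (Fin n1) (Fin n1) ℝ)
    (P : Fin N → Matrix (Fin N × Fin n) (Fin N × Fin n) ℝ) (i : Fin N) :
    Matrix (Fin N × Fin n) (Fin N × Fin n) ℝ :=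
  -(P i * hatA n N A G + (hatA n N A G)ᵀ * P i)
    + P i * (∑ k, Bblk n n1 N B k * R⁻¹ * (Bblk n n1 N B k)ᵀ * P k)
    + (∑ k, P k * Bblk n n1 N B k * R⁻¹ * (Bblk n n1 N B k)ᵀ) * P i
    - P i * Bblk n n1 N B i * R⁻¹ * (Bblk n n1 N B i)ᵀ * P i
    - Qblk n N Q Γ i

/-- `(P_1, …, P_N)` solves the `N`-player Riccati terminal value problem on `[τ, T]`:
each `P_i` is differentiable on `[τ,T]` with derivative given by the Riccati right-hand
side (entrywise), and `P_i(T) = Q_{if}`. -/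
def IsRiccatiSol (n n1 N : ℕ) (A G Q Qf Γ Γf : Matrix (Fin n) (Fin n) ℝ)
    (B : Matrix (Fin n) (Fin n1) ℝ) (R : Matrix (Fin n1) (Fin n1) ℝ) (τ T : ℝ)
    (P : Fin N → ℝ → Matrix (Fin N × Fin n) (Fin N × Fin n) ℝ) : Prop :=
  (∀ i, ∀ t ∈ Set.Icc τ T, ∀ p q,
      HasDerivWithinAt (fun s => P i s p q)
        (riccatiRHS n n1 N A G Q Γ B R (fun k => P k t) i p q) (Set.Icc τ T) t)
  ∧ ∀ i, P i T = Qblk n N Qf Γf i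

/-- The block-permutation matrix `J_{ab}` obtained from `I_{Nn}` by exchanging the
`a`-th and `b`-th block rows (blocks of size `n×n`). -/
noncomputable def Jmat (n N : ℕ) (a b : Fin N) :
    Matrix (Fin N × Fin n) (Fin N × Fin n) ℝ :=
  Matrix.of fun p q => if q = (Equiv.swap a b p.1, p.2) then (1 : ℝ) else 0

/-!
Relabelling the players by a permutation `σ` of `Fin N` maps solutions of the Riccati system to
solutions: conjugating by the block permutation matrix of `σ` fixes `Â`, and sends
`B_k R⁻¹ B_kᵀ` and `Q_k` to those of player `σ k`. The right-hand side is polynomial, hence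
locally Lipschitz, so the terminal value problem has at most one solution. Applied to the
transposition of players `1` and `i`, this identifies `P_i` with the conjugate of `P_1`.
-/

open Set in
theorem ODE_solution_unique_of_contDiff_Icc_left {E : Type*} [NormedAddCommGroup E]
    [NormedSpace ℝ E] {v : E → E} (hv : ContDiff ℝ 1 v) {f g : ℝ → E} {a b : ℝ}
    (hf : ∀ t ∈ Icc a b, HasDerivWithinAt f (v (f t)) (Icc a b) t)
    (hg : ∀ t ∈ Icc a b, HasDerivWithinAt g (v (g t)) (Icc a b) t)
    (hb : f b = g b) : EqOn f g (Icc a b) := by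
  have hfc : ContinuousOn f (Icc a b) := fun t ht => (hf t ht).continuousWithinAt
  have hgc : ContinuousOn g (Icc a b) := fun t ht => (hg t ht).continuousWithinAt
  obtain ⟨K, hK⟩ := hv.locallyLipschitz.locallyLipschitzOn.exists_lipschitzOnWith_of_compact
    ((isCompact_Icc.image_of_continuousOn hfc).union (isCompact_Icc.image_of_continuousOn hgc))
  exact ODE_solution_unique_of_mem_Icc_left (v := fun _ => v) (fun _ _ => hK) hfc
    (fun t ht => (hf t (Ioc_subset_Icc_self ht)).mono_of_mem_nhdsWithin
      (Icc_mem_nhdsLE_of_mem ht))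
    (fun t ht => .inl (mem_image_of_mem f (Ioc_subset_Icc_self ht))) hgc
    (fun t ht => (hg t (Ioc_subset_Icc_self ht)).mono_of_mem_nhdsWithin
      (Icc_mem_nhdsLE_of_mem ht))
    (fun t ht => .inr (mem_image_of_mem g (Ioc_subset_Icc_self ht))) hb

/-- The Riccati right-hand side on `Fin N → _ → _ → ℝ` rather than on tuples of matrices, which
carry no norm. -/
noncomputable def riccatiField (n n1 N : ℕ) (A G Q Γ : Matrix (Fin n) (Fin n) ℝ)
    (B : Matrix (Fin n) (Fin n1) ℝ) (R : Matrix (Fin n1) (Fin n1) ℝ)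
    (x : Fin N → (Fin N × Fin n) → (Fin N × Fin n) → ℝ) :
    Fin N → (Fin N × Fin n) → (Fin N × Fin n) → ℝ :=
  fun i p q => riccatiRHS n n1 N A G Q Γ B R (fun k => Matrix.of (x k)) i p q

section BlockPermutation

variable {n n1 N : ℕ}

/-- Relabelling of the players by `σ`: the `(σ j, r)` entry of the new matrix is the `(j, r)`
entry of the old one. -/
noncomputable def blockConj (n : ℕ) (σ : Equiv.Perm (Fin N)) :
    Matrix (Fin N × Fin n) (Fin N × Fin n) ℝ ≃ₐ[ℝ] Matrix (Fin N × Fin n) (Fin N × Fin n) ℝ :=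
  reindexAlgEquiv ℝ ℝ (σ.prodCongr (Equiv.refl (Fin n)))

theorem blockConj_apply (σ : Equiv.Perm (Fin N)) (M : Matrix (Fin N × Fin n) (Fin N × Fin n) ℝ)
    (p q : Fin N × Fin n) : blockConj n σ M p q = M (σ.symm p.1, p.2) (σ.symm q.1, q.2) := rfl

theorem blockConj_transpose (σ : Equiv.Perm (Fin N))
    (M : Matrix (Fin N × Fin n) (Fin N × Fin n) ℝ) :
    blockConj n σ Mᵀ = (blockConj n σ M)ᵀ := rfl

theorem Jmat_eq_toMatrix (a b : Fin N) :
    Jmat n N a b = ((Equiv.swap a b).prodCongr (Equiv.refl (Fin n))).toPEquiv.toMatrix := by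
  ext p q
  simp [Jmat, PEquiv.toMatrix_apply, eq_comm, Prod.map]

theorem Jmat_transpose_mul_mul (a b : Fin N) (M : Matrix (Fin N × Fin n) (Fin N × Fin n) ℝ) :
    (Jmat n N a b)ᵀ * M * Jmat n N a b = blockConj n (Equiv.swap a b) M := by
  rw [Jmat_eq_toMatrix, ← PEquiv.toMatrix_symm, ← Equiv.toPEquiv_symm,
    PEquiv.toMatrix_toPEquiv_mul, PEquiv.mul_toMatrix_toPEquiv]
  rfl

theorem blockConj_hatA (σ : Equiv.Perm (Fin N)) (A G : Matrix (Fin n) (Fin n) ℝ) :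
    blockConj n σ (hatA n N A G) = hatA n N A G := by
  ext p q
  simp [blockConj_apply, hatA]

theorem blockConj_Bblk_mul_mul_transpose (σ : Equiv.Perm (Fin N))
    (B : Matrix (Fin n) (Fin n1) ℝ) (R : Matrix (Fin n1) (Fin n1) ℝ) (k : Fin N) :
    blockConj n σ (Bblk n n1 N B k * R * (Bblk n n1 N B k)ᵀ) =
      Bblk n n1 N B (σ k) * R * (Bblk n n1 N B (σ k))ᵀ := by
  ext p q
  simp [blockConj_apply, Bblk, Matrix.mul_apply, Equiv.symm_apply_eq]

theorem blockConj_Qblk (σ : Equiv.Perm (Fin N)) (Q Γ : Matrix (Fin n) (Fin n) ℝ) (i : Fin N) :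
    blockConj n σ (Qblk n N Q Γ i) = Qblk n N Q Γ (σ i) := by
  ext p q
  simp [blockConj_apply, Qblk, Kblk, Matrix.mul_apply, Equiv.symm_apply_eq]

theorem riccatiRHS_eq_gain (A G Q Γ : Matrix (Fin n) (Fin n) ℝ)
    (B : Matrix (Fin n) (Fin n1) ℝ) (R : Matrix (Fin n1) (Fin n1) ℝ)
    (P : Fin N → Matrix (Fin N × Fin n) (Fin N × Fin n) ℝ) (i : Fin N) :
    let S k := Bblk n n1 N B k * R⁻¹ * (Bblk n n1 N B k)ᵀ
    riccatiRHS n n1 N A G Q Γ B R P i =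
      -(P i * hatA n N A G + (hatA n N A G)ᵀ * P i) + P i * ∑ k, S k * P k
        + (∑ k, P k * S k) * P i - P i * S i * P i - Qblk n N Q Γ i := by
  simp only [riccatiRHS, Matrix.mul_assoc]

theorem blockConj_riccatiRHS (σ : Equiv.Perm (Fin N)) (A G Q Γ : Matrix (Fin n) (Fin n) ℝ)
    (B : Matrix (Fin n) (Fin n1) ℝ) (R : Matrix (Fin n1) (Fin n1) ℝ)
    (P : Fin N → Matrix (Fin N × Fin n) (Fin N × Fin n) ℝ) (i : Fin N) :
    blockConj n σ (riccatiRHS n n1 N A G Q Γ B R P i) =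
      riccatiRHS n n1 N A G Q Γ B R (fun k => blockConj n σ (P (σ.symm k))) (σ i) := by
  simp only [riccatiRHS_eq_gain, map_sub, map_add, map_neg, map_mul, map_sum,
    blockConj_transpose, blockConj_hatA, blockConj_Bblk_mul_mul_transpose, blockConj_Qblk,
    Equiv.symm_apply_apply]
  rw [← Equiv.sum_comp σ (fun k => _ * blockConj n σ (P (σ.symm k))),
    ← Equiv.sum_comp σ (fun k => blockConj n σ (P (σ.symm k)) * _)]
  simp only [Equiv.symm_apply_apply]

end BlockPermutation

section Solutions

variable {n n1 N : ℕ} {A G Q Qf Γ Γf : Matrix (Fin n) (Fin n) ℝ}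
  {B : Matrix (Fin n) (Fin n1) ℝ} {R : Matrix (Fin n1) (Fin n1) ℝ} {τ T : ℝ}
  {P P' : Fin N → ℝ → Matrix (Fin N × Fin n) (Fin N × Fin n) ℝ}

theorem contDiff_riccatiField :
    ContDiff ℝ 1 (riccatiField n n1 N A G Q Γ B R) := by
  refine contDiff_pi.2 fun i => contDiff_pi.2 fun p => contDiff_pi.2 fun q => ?_
  simp only [riccatiField, riccatiRHS, Matrix.sub_apply, Matrix.add_apply, Matrix.neg_apply,
    Matrix.mul_apply, Matrix.sum_apply, Matrix.transpose_apply, Matrix.of_apply]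
  fun_prop

theorem IsRiccatiSol.hasDerivWithinAt_riccatiField
    (hP : IsRiccatiSol n n1 N A G Q Qf Γ Γf B R τ T P) {t : ℝ} (ht : t ∈ Set.Icc τ T) :
    HasDerivWithinAt (fun s k p q => P k s p q)
      (riccatiField n n1 N A G Q Γ B R fun k p q => P k t p q) (Set.Icc τ T) t :=
  hasDerivWithinAt_pi.2 fun k => hasDerivWithinAt_pi.2 fun p => hasDerivWithinAt_pi.2 fun q =>
    hP.1 k t ht p q

theorem IsRiccatiSol.unique (hP : IsRiccatiSol n n1 N A G Q Qf Γ Γf B R τ T P)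
    (hP' : IsRiccatiSol n n1 N A G Q Qf Γ Γf B R τ T P') {t : ℝ} (ht : t ∈ Set.Icc τ T)
    (k : Fin N) : P k t = P' k t := by
  have hterminal : (fun k p q => P k T p q) = fun k p q => P' k T p q := by
    simp only [hP.2, hP'.2]
  have h := ODE_solution_unique_of_contDiff_Icc_left contDiff_riccatiField
    (fun _ => hP.hasDerivWithinAt_riccatiField) (fun _ => hP'.hasDerivWithinAt_riccatiField)
    hterminal ht
  ext p q
  exact congrFun (congrFun (congrFun h k) p) q

theorem IsRiccatiSol.relabel (σ : Equiv.Perm (Fin N))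
    (hP : IsRiccatiSol n n1 N A G Q Qf Γ Γf B R τ T P) :
    IsRiccatiSol n n1 N A G Q Qf Γ Γf B R τ T fun k s => blockConj n σ (P (σ.symm k) s) := by
  refine ⟨fun k t ht p q => ?_, fun k => ?_⟩
  · have h := congrArg (· p q) (blockConj_riccatiRHS σ A G Q Γ B R (fun j => P j t) (σ.symm k))
    rw [Equiv.apply_symm_apply] at h
    beta_reduce
    rw [← h]
    exact hP.1 (σ.symm k) t ht (σ.symm p.1, p.2) (σ.symm q.1, q.2)
  · show blockConj n σ (P (σ.symm k) T) = _
    rw [hP.2, blockConj_Qblk, Equiv.apply_symm_apply]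

end Solutions

theorem riccati_Pi_permutation_of_P1_general
    (n n1 N : ℕ)
    (T : ℝ)
    (A G Q Qf Γ Γf : Matrix (Fin n) (Fin n) ℝ)
    (B : Matrix (Fin n) (Fin n1) ℝ) (R : Matrix (Fin n1) (Fin n1) ℝ)
    (P : Fin N → ℝ → Matrix (Fin N × Fin n) (Fin N × Fin n) ℝ)
    (hP : IsRiccatiSol n n1 N A G Q Qf Γ Γf B R 0 T P) :
    ∀ i₀ i : Fin N, i₀.val = 0 → i ≠ i₀ →
      ∀ t ∈ Set.Icc (0:ℝ) T,
        P i t = (Jmat n N i₀ i)ᵀ * P i₀ t * Jmat n N i₀ i := by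
  intro i₀ i _ _ t ht
  rw [Jmat_transpose_mul_mul, hP.unique (hP.relabel (Equiv.swap i₀ i)) ht i,
    Equiv.symm_swap, Equiv.swap_apply_right]

/-- If the `N`-player Riccati system has a solution on `[0, T]`, then
for every player index `i` other than the first one (`i₀` with `i₀.val = 0`),
`P_i(t) = J_{1i}ᵀ P_1(t) J_{1i}` on `[0, T]`. -/
theorem riccati_Pi_permutation_of_P1
    (n n1 N : ℕ) (hn : 0 < n) (hn1 : 0 < n1) (hN : 0 < N)
    (T : ℝ) (hT : 0 < T)
    (A G Q Qf Γ Γf : Matrix (Fin n) (Fin n) ℝ)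
    (B : Matrix (Fin n) (Fin n1) ℝ) (R : Matrix (Fin n1) (Fin n1) ℝ)
    (hQ : Q.PosSemidef) (hQf : Qf.PosSemidef) (hR : R.PosDef)
    (P : Fin N → ℝ → Matrix (Fin N × Fin n) (Fin N × Fin n) ℝ)
    (hP : IsRiccatiSol n n1 N A G Q Qf Γ Γf B R 0 T P) :
    ∀ i₀ i : Fin N, i₀.val = 0 → i ≠ i₀ →
      ∀ t ∈ Set.Icc (0:ℝ) T,
        P i t = (Jmat n N i₀ i)ᵀ * P i₀ t * Jmat n N i₀ i :=
  riccati_Pi_permutation_of_P1_general n n1 N T A G Q Qf Γ Γf B R P hP
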